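/- arXiv:2306.09666 — 4 statements merged into one kernel-verified Lean document; each statement's English description precedes it below -/
import Mathlib

section
/- For all integers T ≥ 13, if h is the smallest even integer with h ≥ ⌈log₂ T⌉ + log₂ log₂ T, then C(h, h/2) ≥ T + 1. -/
private lemma logb_gt_nat (k a : ℕ) (h2 : 2^k < a) : (k:ℝ) < Real.logb 2 a := by
  have ha : (0:ℝ) < a := by
    have : 0 < a := Nat.lt_of_le_of_lt (Nat.zero_le _) h2
    exact_mod_cast this
  rw [Real.lt_logb_iff_rpow_lt one_lt_two ha, Real.rpow_natCast]
  exact_mod_cast h2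

private lemma logb_le_nat (k : ℕ) (a : ℝ) (ha : 0 < a) (h2 : a ≤ 2^k) :
    Real.logb 2 a ≤ (k:ℝ) := by
  rw [Real.logb_le_iff_le_rpow one_lt_two ha, Real.rpow_natCast]
  exact h2

/-- For all integers `T ≥ 13`, if `h` is the smallest even integer with
`h ≥ ⌈log₂ T⌉ + log₂ log₂ T`, then `C(h, h/2) ≥ T + 1`. -/
theorem stmt_1 (T : ℕ) (hT : 13 ≤ T) (h : ℕ)
    (hEven : Even h)
    (hge : ((⌈Real.logb 2 T⌉ : ℝ) + Real.logb 2 (Real.logb 2 T)) ≤ (h : ℝ))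
    (hmin : ∀ h' : ℕ, Even h' →
      ((⌈Real.logb 2 T⌉ : ℝ) + Real.logb 2 (Real.logb 2 T)) ≤ (h' : ℝ) → h ≤ h') :
    T + 1 ≤ Nat.choose h (h / 2) := by
  set x := Real.logb 2 T with hxdef
  have hTpos : (0:ℝ) < T := by positivity
  have hx3 : (3:ℝ) < x := by
    have := logb_gt_nat 3 T (by omega)
    simpa using this
  have hxpos : (0:ℝ) < x := by linarith
  -- lower bound: T * x ≤ 2^h
  have hA : (T:ℝ) * x ≤ 2^h := by
    have h2 : x + Real.logb 2 x ≤ (h:ℝ) := by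
      have := Int.le_ceil x
      linarith [hge]
    have h3 : Real.logb 2 ((T:ℝ)*x) ≤ (h:ℝ) := by
      rw [Real.logb_mul (ne_of_gt hTpos) (ne_of_gt hxpos)]
      exact h2
    rw [Real.logb_le_iff_le_rpow one_lt_two (by positivity)] at h3
    rwa [Real.rpow_natCast] at h3
  -- h ≥ 6
  have hh6 : 6 ≤ h := by
    by_contra hc
    push_neg at hc
    have h2h : (2:ℝ)^h ≤ 2^5 := by
      apply pow_le_pow_right₀ (by norm_num) (by omega)
    have : (13:ℝ) * 3 ≤ (T:ℝ) * x := by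
      apply mul_le_mul (by exact_mod_cast hT) hx3.le (by norm_num) (by positivity)
    norm_num at h2h
    linarith
  by_cases hbig : 12 ≤ h
  · -- big case
    obtain ⟨n, hn⟩ := hEven
    have hn2 : h = 2 * n := by omega
    have hhalf : h / 2 = n := by omega
    -- x > 7
    have hx7 : (7:ℝ) < x := by
      by_contra hc
      push_neg at hc
      have hceil : (⌈x⌉:ℝ) ≤ 7 := by
        have : ⌈x⌉ ≤ (7:ℤ) := Int.ceil_le.mpr (by norm_num; exact hc)
        exact_mod_cast this
      have hlx : Real.logb 2 x ≤ 3 := by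
        have := logb_le_nat 3 x hxpos (by norm_num; linarith)
        simpa using this
      have h10 : h ≤ 10 := by
        apply hmin 10 ⟨5, rfl⟩
        push_cast
        linarith
      omega
    -- upper bound on h
    have hlognn : 0 ≤ Real.logb 2 x := Real.logb_nonneg one_lt_two (by linarith)
    have hB : (h:ℝ) ≤ x + Real.logb 2 x + 3 := by
      set L : ℝ := (⌈x⌉:ℝ) + Real.logb 2 x with hLdef
      have hL0 : 0 ≤ L := by
        have := Int.le_ceil x
        simp only [hLdef]
        linarith
      set k : ℕ := ⌈L⌉₊ with hkdef
      have hkL : L ≤ (k:ℝ) := Nat.le_ceil L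
      have hm : h ≤ 2*((k+1)/2) := by
        apply hmin _ ⟨(k+1)/2, by omega⟩
        have hm1 : (k:ℝ) ≤ ((2*((k+1)/2) : ℕ) : ℝ) := by
          have : k ≤ 2*((k+1)/2) := by omega
          exact_mod_cast this
        linarith
      have hm2 : ((2*((k+1)/2) : ℕ) : ℝ) ≤ (k:ℝ) + 1 := by
        have : 2*((k+1)/2) ≤ k + 1 := by omega
        exact_mod_cast this
      have hkup : (k:ℝ) < L + 1 := Nat.ceil_lt_add_one hL0
      have hceilx : (⌈x⌉:ℝ) < x + 1 := Int.ceil_lt_add_one x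
      have hhm : (h:ℝ) ≤ ((2*((k+1)/2) : ℕ) : ℝ) := by exact_mod_cast hm
      simp only [hLdef] at hkup
      linarith
    -- analytic bound: logb 2 x + 3 ≤ 6x/7 for x ≥ 7
    have hlog2pos : (0:ℝ) < Real.log 2 := Real.log_pos one_lt_two
    have key : Real.logb 2 x + 3 ≤ 6*x/7 := by
      have h8 : Real.log (x/8) ≤ x/8 - 1 := Real.log_le_sub_one_of_pos (by linarith)
      have hdiv : Real.log (x/8) = Real.log x - Real.log 8 :=
        Real.log_div (by linarith) (by norm_num)
      have h8' : Real.log (8:ℝ) = 3 * Real.log 2 := by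
        rw [show (8:ℝ) = 2^3 by norm_num, Real.log_pow]
        push_cast; ring
      have e2 : Real.log x ≤ 3*Real.log 2 + (x/8 - 1) := by
        rw [hdiv, h8'] at h8; linarith
      have e1 : Real.logb 2 x * Real.log 2 = Real.log x := by
        rw [Real.logb]
        field_simp
      have l2 := Real.log_two_gt_d9
      nlinarith [mul_le_mul_of_nonneg_left l2.le (by linarith : (0:ℝ) ≤ 6*x/7 - 6)]
    have hhx : (h:ℝ) ≤ 13*x/7 := by linarith
    -- central binomial
    have hC : (4:ℕ)^n < n * Nat.centralBinom n :=
      Nat.four_pow_lt_mul_centralBinom n (by omega)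
    have hCr : (4:ℝ)^n < (n:ℝ) * (Nat.centralBinom n : ℝ) := by exact_mod_cast hC
    have h4 : (4:ℝ)^n = 2^h := by
      rw [hn2, pow_mul]; norm_num
    have hprod : ((T:ℝ)+1) * h ≤ 2 * ((T:ℝ) * x) := by
      have a1 : (T:ℝ)+1 ≤ 14*(T:ℝ)/13 := by
        have : (13:ℝ) ≤ T := by exact_mod_cast hT
        linarith
      have := mul_le_mul a1 hhx (by positivity) (by positivity)
      calc ((T:ℝ)+1) * h ≤ (14*(T:ℝ)/13) * (13*x/7) := this
        _ = 2 * ((T:ℝ) * x) := by ring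
    have hnr : ((n:ℝ)) * 2 = (h:ℝ) := by
      rw [hn2]; push_cast; ring
    have hfin : ((T:ℝ)+1) * h < (h:ℝ) * (Nat.centralBinom n : ℝ) := by
      have : (2:ℝ) * (2:ℝ)^h = 2 * (4:ℝ)^n := by rw [h4]
      nlinarith [hCr]
    have hhpos : (0:ℝ) < h := by positivity
    have hlast : ((T:ℝ)+1) < (Nat.centralBinom n : ℝ) := by
      by_contra hc
      push_neg at hc
      have : (h:ℝ) * (Nat.centralBinom n : ℝ) ≤ (h:ℝ) * ((T:ℝ)+1) :=
        mul_le_mul_of_nonneg_left hc (by positivity)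
      nlinarith
    have : T + 1 < Nat.centralBinom n := by exact_mod_cast hlast
    rw [hhalf, hn2]
    exact this.le
  · -- small cases: h = 6, 8, 10
    push_neg at hbig
    obtain ⟨m, hm⟩ := hEven
    have hcases : h = 6 ∨ h = 8 ∨ h = 10 := by omega
    rcases hcases with rfl | rfl | rfl
    · -- h = 6, C(6,3) = 20
      show T + 1 ≤ 20
      by_contra hc
      push_neg at hc
      have hT20 : 20 ≤ T := by omega
      have hx4 : (4:ℝ) < x := logb_gt_nat 4 T (by omega)
      have : (20:ℝ) * 4 ≤ (T:ℝ) * x := by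
        apply mul_le_mul (by exact_mod_cast hT20) hx4.le (by norm_num) (by positivity)
      norm_num at hA
      linarith
    · -- h = 8, C(8,4) = 70
      show T + 1 ≤ 70
      by_contra hc
      push_neg at hc
      have hT70 : 70 ≤ T := by omega
      have hx6 : (6:ℝ) < x := logb_gt_nat 6 T (by omega)
      have : (70:ℝ) * 6 ≤ (T:ℝ) * x := by
        apply mul_le_mul (by exact_mod_cast hT70) hx6.le (by norm_num) (by positivity)
      norm_num at hA
      linarith
    · -- h = 10, C(10,5) = 252
      show T + 1 ≤ 252
      by_contra hc
      push_neg at hc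
      have hT252 : 252 ≤ T := by omega
      have hx7 : (7:ℝ) < x := logb_gt_nat 7 T (by omega)
      have : (252:ℝ) * 7 ≤ (T:ℝ) * x := by
        apply mul_le_mul (by exact_mod_cast hT252) hx7.le (by norm_num) (by positivity)
      norm_num at hA
      linarith
end

section
/- For every integer k ≥ 1, the identity ∑_{n=1}^{k} n · C(2k−n, k−n+1) = C(2k+1, k+1) − (k+1) holds. -/
lemma aux3 (K m : ℕ) (h : m ≤ K) :
    (∑ n ∈ Finset.Icc 1 m, n * Nat.choose (2 * K - n) (K - n + 1))
      + Nat.choose (2 * K + 1 - m) (K + 1) + m * Nat.choose (2 * K - m) K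
      = Nat.choose (2 * K + 1) (K + 1) := by
  induction m with
  | zero => simp
  | succ m ih =>
    have ih' := ih (by omega)
    rw [Finset.sum_Icc_succ_top (by omega : 1 ≤ m + 1)]
    obtain ⟨t, rfl⟩ : ∃ t, K = m + t + 1 := ⟨K - (m + 1), by omega⟩
    have e1 : 2 * (m + t + 1) - (m + 1) = m + 2 * t + 1 := by omega
    have e2 : (m + t + 1) - (m + 1) + 1 = t + 1 := by omega
    have e3 : 2 * (m + t + 1) + 1 - (m + 1) = m + 2 * t + 2 := by omega
    have e4 : 2 * (m + t + 1) + 1 - m = m + 2 * t + 3 := by omega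
    have e5 : 2 * (m + t + 1) - m = m + 2 * t + 2 := by omega
    have e6 : m + t + 1 + 1 = m + t + 2 := by omega
    rw [e1, e2, e3, e6]
    rw [e4, e5, e6] at ih'
    -- symmetry : C(m+2t+1, t+1) = C(m+2t+1, m+t)
    have sym : Nat.choose (m + 2 * t + 1) (t + 1) = Nat.choose (m + 2 * t + 1) (m + t) := by
      have := Nat.choose_symm (n := m + 2 * t + 1) (k := m + t) (by omega)
      have e : m + 2 * t + 1 - (m + t) = t + 1 := by omega
      rw [e] at this
      exact this
    have p1 : Nat.choose (m + 2 * t + 2) (m + t + 1)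
        = Nat.choose (m + 2 * t + 1) (m + t) + Nat.choose (m + 2 * t + 1) (m + t + 1) :=
      Nat.choose_succ_succ' (m + 2 * t + 1) (m + t)
    have p2 : Nat.choose (m + 2 * t + 3) (m + t + 2)
        = Nat.choose (m + 2 * t + 2) (m + t + 1) + Nat.choose (m + 2 * t + 2) (m + t + 2) :=
      Nat.choose_succ_succ' (m + 2 * t + 2) (m + t + 1)
    rw [sym]
    have key : (m + 1) * Nat.choose (m + 2 * t + 1) (m + t)
        + (m + 1) * Nat.choose (m + 2 * t + 1) (m + t + 1)
        = m * Nat.choose (m + 2 * t + 2) (m + t + 1)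
          + Nat.choose (m + 2 * t + 2) (m + t + 1) := by
      rw [p1]; ring
    omega

/-- For every integer `k ≥ 1`,
`∑_{n=1}^{k} n · C(2k−n, k−n+1) = C(2k+1, k+1) − (k+1)`. -/
theorem stmt_3 (k : ℕ) (hk : 1 ≤ k) :
    ∑ n ∈ Finset.Icc 1 k, n * Nat.choose (2 * k - n) (k - n + 1)
      = Nat.choose (2 * k + 1) (k + 1) - (k + 1) := by
  have h := aux3 k k le_rfl
  have e1 : 2 * k + 1 - k = k + 1 := by omega
  have e2 : 2 * k - k = k := by omega
  rw [e1, e2, Nat.choose_self, Nat.choose_self] at h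
  omega
end

section
/- For every integer k ≥ 1, ∑_{n=1}^{k} n·C(2k−n, k−n+1) ≤ 2·C(2k, k) + k. -/
lemma stmt_7_aux (k : ℕ) (hk : 1 ≤ k) : ∀ j, j ≤ k →
    ∑ n ∈ Finset.Icc 1 j, n * Nat.choose (2 * k - n) (k - 1)
      + (j + 1) * Nat.choose (2 * k - j) k + Nat.choose (2 * k - j) (k + 1)
      = Nat.choose (2 * k + 1) (k + 1) := by
  intro j
  induction j with
  | zero =>
    intro _
    simp [Nat.choose_succ_succ]
  | succ j ih =>
    intro hj
    have ih' := ih (by omega)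
    obtain ⟨m, hm⟩ : ∃ m, 2 * k - (j + 1) = m := ⟨_, rfl⟩
    have hm1 : 2 * k - j = m + 1 := by omega
    rw [Finset.sum_Icc_succ_top (by omega : 1 ≤ j + 1)]
    rw [hm1] at ih'
    rw [hm]
    have hk1 : k - 1 + 1 = k := by omega
    have p1 : Nat.choose (m + 1) k = Nat.choose m (k - 1) + Nat.choose m k := by
      rw [← hk1, Nat.choose_succ_succ, Nat.succ_eq_add_one, hk1]
    have p2 : Nat.choose (m + 1) (k + 1) = Nat.choose m k + Nat.choose m (k + 1) :=
      Nat.choose_succ_succ m k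
    rw [p1, p2] at ih'
    set S := ∑ n ∈ Finset.Icc 1 j, n * Nat.choose (2 * k - n) (k - 1) with hS
    set a := Nat.choose m (k - 1)
    set b := Nat.choose m k
    set c := Nat.choose m (k + 1)
    calc S + (j + 1) * a + (j + 1 + 1) * b + c
        = S + (j + 1) * (a + b) + (b + c) := by ring
      _ = Nat.choose (2 * k + 1) (k + 1) := ih'

/-- For every integer `k ≥ 1`,
`∑_{n=1}^{k} n·C(2k−n, k−n+1) ≤ 2·C(2k, k) + k`. -/
theorem stmt_7 (k : ℕ) (hk : 1 ≤ k) :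
    ∑ n ∈ Finset.Icc 1 k, n * Nat.choose (2 * k - n) (k - n + 1)
      ≤ 2 * Nat.choose (2 * k) k + k := by
  have hsum : ∑ n ∈ Finset.Icc 1 k, n * Nat.choose (2 * k - n) (k - n + 1)
      = ∑ n ∈ Finset.Icc 1 k, n * Nat.choose (2 * k - n) (k - 1) := by
    refine Finset.sum_congr rfl fun n hn => ?_
    simp only [Finset.mem_Icc] at hn
    have h1 : k - n + 1 = (2 * k - n) - (k - 1) := by omega
    rw [h1, Nat.choose_symm (by omega)]
  have haux := stmt_7_aux k hk k le_rfl
  have hkk : 2 * k - k = k := by omega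
  rw [hkk, Nat.choose_self, Nat.choose_succ_self, mul_one, add_zero] at haux
  have hpascal : Nat.choose (2 * k + 1) (k + 1)
      = Nat.choose (2 * k) k + Nat.choose (2 * k) (k + 1) :=
    Nat.choose_succ_succ (2 * k) k
  have hmid : Nat.choose (2 * k) (k + 1) ≤ Nat.choose (2 * k) k := by
    have := Nat.choose_le_middle (k + 1) (2 * k)
    rwa [show (2 * k) / 2 = k by omega] at this
  rw [hsum]
  omega
end

section
/- Let k ≥ 1. Among the 2k-bit integers with exactly k ones listed in increasing order m(1) < m(2) < ..., for any consecutive pair the number of ones n in the least significant block of ones of m(t) satisfies 1 ≤ n ≤ k, and the sum over all consecutive transitions of n (the per-step replacement cost) plus the final index's block size equals ∑_{n=1}^{k} n · C(2k−n, k−n+1). -/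
/-!
Every `x ≠ 0` factors uniquely as `x = 2 ^ z * (2 ^ n * (2 * u + 1) - 1)` with `n ≥ 1`: reading
upwards, `z` zeros, the lowest block of `n` ones, one zero, then the bits of `u`; and
`lowBlockLen x = n`. Hence `x` has `k` ones among its lowest `2k` bits iff `z + n ≤ 2k`, `n ≤ k` and
`u` has `k - n` ones among the `2k - z - n - 1` bits above the block. Summing over `z` with the
hockey-stick identity, exactly `C(2k - n, k - n + 1) + [n = k]` of the listed numbers have block
length `n`, so the block lengths of all of them add up to the right-hand side plus `k`. The
transition sum omits only the first number `2 ^ k - 1`, whose block length is `k`.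
-/

/-- The length of the least significant block of ones in the binary representation
of `x` (and `0` for `x = 0`): shift away the trailing zeros, then count trailing ones. -/
def lowBlockLen (x : ℕ) : ℕ := padicValNat 2 (x / 2 ^ (padicValNat 2 x) + 1)

open Finset

namespace Nat

theorem toFinset_bitIndices_subset_range_iff {x M : ℕ} :
    x.bitIndices.toFinset ⊆ range M ↔ x < 2 ^ M := by
  refine ⟨fun h => ?_, fun hx i hi => ?_⟩
  · calc x = ∑ i ∈ x.bitIndices.toFinset, 2 ^ i := (sum_toFinset_bitIndices_two_pow x).symm
      _ < 2 ^ M := geomSum_lt le_rfl fun i hi => mem_range.1 (h hi)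
  · rw [List.mem_toFinset] at hi
    exact mem_range.2 ((Nat.pow_lt_pow_iff_right one_lt_two).1
      ((two_pow_le_of_mem_bitIndices hi).trans_lt hx))

theorem filter_testBit_range_eq {x M : ℕ} (hx : x < 2 ^ M) :
    {i ∈ range M | x.testBit i} = x.bitIndices.toFinset := by
  ext i
  simp only [mem_filter, List.mem_toFinset, mem_bitIndices, and_iff_right_iff_imp]
  exact fun h => toFinset_bitIndices_subset_range_iff.2 hx (by simpa using h)

theorem sum_range_two_pow (n : ℕ) : ∑ i ∈ range n, 2 ^ i = 2 ^ n - 1 := by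
  simpa using geomSum_eq le_rfl n

theorem sum_range_choose_sub_succ (m q : ℕ) :
    ∑ z ∈ range (m + 1), (m - (z + 1)).choose q = m.choose (q + 1) + if q = 0 then 1 else 0 := by
  induction m with
  | zero => cases q <;> simp
  | succ m ih =>
    rw [sum_range_succ', choose_succ_succ', add_assoc, ← ih]
    simp only [Nat.add_sub_add_right, zero_add, Nat.add_sub_cancel]
    ring

end Nat

theorem odd_two_pow_mul_sub_one {n w : ℕ} (hn : 1 ≤ n) (hw : Odd w) : Odd (2 ^ n * w - 1) :=
  Nat.Even.sub_odd (Nat.one_le_iff_ne_zero.2 (mul_ne_zero (by positivity) hw.pos.ne'))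
    ((Nat.even_pow.2 ⟨even_two, by omega⟩).mul_right w) odd_one

theorem padicValNat_two_pow_mul_odd {z w : ℕ} (hw : Odd w) : padicValNat 2 (2 ^ z * w) = z := by
  rw [padicValNat.mul (by positivity) hw.pos.ne', padicValNat.prime_pow,
    padicValNat.eq_zero_of_not_dvd hw.not_two_dvd_nat, add_zero]

theorem Finset.sum_map_sort {α M : Type*} [AddCommMonoid M] (s : Finset α)
    (r : α → α → Prop) [DecidableRel r] [IsTrans α r] [Std.Antisymm r] [Std.Total r]
    (f : α → M) : ((s.sort r).map f).sum = ∑ x ∈ s, f x := by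
  rw [sum_eq_multiset_sum, ← sort_eq s r, Multiset.map_coe, Multiset.sum_coe]

theorem Finset.sum_range_length_getD {α M : Type*} [AddCommMonoid M] (L : List α) (d : α)
    (f : α → M) : ∑ i ∈ range L.length, f (L.getD i d) = (L.map f).sum := by
  rw [sum_range, ← Fin.sum_univ_fun_getElem]
  simp

theorem Finset.sum_range_eq_first_add_middle_add_last {M : Type*} [AddCommMonoid M] (g : ℕ → M)
    {n : ℕ} (hn : 2 ≤ n) :
    ∑ i ∈ range n, g i = g 0 + ((∑ t ∈ range (n - 2), g (t + 1)) + g (n - 1)) := by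
  obtain ⟨m, rfl⟩ := Nat.exists_eq_add_of_le' hn
  rw [sum_range_succ', add_comm, Nat.add_sub_cancel, show m + 2 - 1 = m + 1 by omega,
    sum_range_succ]

def popcountSet (M r : ℕ) : Finset ℕ :=
  {x ∈ range (2 ^ M) | #{i ∈ range M | x.testBit i} = r}

theorem mem_popcountSet {M r x : ℕ} :
    x ∈ popcountSet M r ↔ x.bitIndices.toFinset ⊆ range M ∧ #x.bitIndices.toFinset = r := by
  rw [popcountSet, mem_filter, mem_range, ← Nat.toFinset_bitIndices_subset_range_iff]
  exact and_congr_right fun h => by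
    rw [Nat.filter_testBit_range_eq (Nat.toFinset_bitIndices_subset_range_iff.1 h)]

theorem card_popcountSet (M r : ℕ) : #(popcountSet M r) = M.choose r := by
  rw [card_equiv equivBitIndices (t := powersetCard r (range M)) fun x => by
    simp [mem_popcountSet, mem_powersetCard], card_powersetCard, card_range]

theorem ne_zero_of_mem_popcountSet {M r x : ℕ} (hr : 1 ≤ r) (hx : x ∈ popcountSet M r) :
    x ≠ 0 := by
  rintro rfl
  simp [mem_popcountSet] at hx
  omega

def blockNum (n z u : ℕ) : ℕ := 2 ^ z * (2 ^ n * (2 * u + 1) - 1)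

theorem blockNum_eq_add (n z u : ℕ) :
    blockNum n z u = 2 ^ z * (2 ^ n - 1) + 2 ^ (z + n + 1) * u := by
  have h : 1 ≤ 2 ^ n := Nat.one_le_two_pow
  rw [blockNum, pow_succ, pow_add, mul_assoc, mul_assoc, ← mul_add]
  congr 1
  rw [mul_add, mul_one, ← mul_assoc, mul_comm (2 ^ n) 2]
  omega

theorem toFinset_bitIndices_blockNum (n z u : ℕ) :
    (blockNum n z u).bitIndices.toFinset =
      Ico z (z + n) ∪ u.bitIndices.toFinset.map (addRightEmbedding (z + n + 1)) := by
  have hdisj :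
      Disjoint (Ico z (z + n)) (u.bitIndices.toFinset.map (addRightEmbedding (z + n + 1))) := by
    simp only [disjoint_left, mem_Ico, mem_map, addRightEmbedding_apply]
    omega
  rw [← toFinset_bitIndices_sum_two_pow (_ ∪ _), sum_union hdisj, sum_map, sum_Ico_eq_sum_range]
  simp only [addRightEmbedding_apply, pow_add, ← mul_sum, ← sum_mul, Nat.sum_range_two_pow,
    sum_toFinset_bitIndices_two_pow, add_tsub_cancel_left]
  rw [blockNum_eq_add, pow_add, pow_add, mul_comm u]

-- When the block reaches the top bit (`z + n = M`), `M - (z + n + 1)` truncates to `0`,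
-- which correctly forces `u = 0`.
theorem blockNum_mem_popcountSet_iff {M r n z u : ℕ} (hn : 1 ≤ n) :
    blockNum n z u ∈ popcountSet M r ↔
      z + n ≤ M ∧ n ≤ r ∧ u ∈ popcountSet (M - (z + n + 1)) (r - n) := by
  have hIco : Ico z (z + n) ⊆ range M ↔ z + n ≤ M := by
    refine ⟨fun h => ?_, fun h i hi => ?_⟩
    · have := mem_range.1 (h (mem_Ico.2 ⟨by omega, by omega⟩ : z + n - 1 ∈ Ico z (z + n)))
      omega
    · exact mem_range.2 (by have := mem_Ico.1 hi; omega)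
  have hmap : u.bitIndices.toFinset.map (addRightEmbedding (z + n + 1)) ⊆ range M ↔
      u.bitIndices.toFinset ⊆ range (M - (z + n + 1)) := by
    simp only [subset_iff, mem_map, addRightEmbedding_apply, mem_range, forall_exists_index,
      and_imp, forall_apply_eq_imp_iff₂]
    exact forall₂_congr fun _ _ => by omega
  rw [mem_popcountSet, mem_popcountSet, toFinset_bitIndices_blockNum, union_subset_iff, hIco,
    hmap, card_union_of_disjoint, card_map, Nat.card_Ico]
  · constructor
    · rintro ⟨⟨hzn, hu⟩, hcard⟩
      exact ⟨hzn, by omega, hu, by omega⟩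
    · rintro ⟨hzn, hnr, hu, hcard⟩
      exact ⟨⟨hzn, hu⟩, by omega⟩
  · simp only [disjoint_left, mem_Ico, mem_map, addRightEmbedding_apply]
    omega

theorem padicValNat_blockNum {n : ℕ} (z u : ℕ) (hn : 1 ≤ n) :
    padicValNat 2 (blockNum n z u) = z :=
  padicValNat_two_pow_mul_odd (odd_two_pow_mul_sub_one hn (odd_two_mul_add_one u))

theorem lowBlockLen_blockNum {n : ℕ} (z u : ℕ) (hn : 1 ≤ n) :
    lowBlockLen (blockNum n z u) = n := by
  have h : 1 ≤ 2 ^ n * (2 * u + 1) := Nat.one_le_iff_ne_zero.2 (by positivity)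
  rw [lowBlockLen, padicValNat_blockNum z u hn, blockNum,
    Nat.mul_div_cancel_left _ (by positivity), Nat.sub_add_cancel h,
    padicValNat_two_pow_mul_odd (odd_two_mul_add_one u)]

theorem blockNum_injective {n : ℕ} (hn : 1 ≤ n) :
    Function.Injective fun p : (_ : ℕ) × ℕ => blockNum n p.1 p.2 := by
  rintro ⟨z, u⟩ ⟨z', u'⟩ (h : blockNum n z u = blockNum n z' u')
  obtain rfl : z = z' := by
    simpa only [padicValNat_blockNum _ _ hn] using congrArg (padicValNat 2) h
  have hodd := Nat.sub_one_cancel (by positivity) (by positivity)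
    (Nat.eq_of_mul_eq_mul_left (by positivity) h)
  obtain rfl : u = u' := by have := Nat.eq_of_mul_eq_mul_left (by positivity) hodd; omega
  rfl

theorem exists_eq_blockNum {x : ℕ} (hx : x ≠ 0) : ∃ n z u, 1 ≤ n ∧ x = blockNum n z u := by
  obtain ⟨z, y, hy, rfl⟩ := Nat.exists_eq_two_pow_mul_odd hx
  obtain ⟨n, w, ⟨u, rfl⟩, hyw⟩ := Nat.exists_eq_two_pow_mul_odd (by omega : y + 1 ≠ 0)
  have hn : 1 ≤ n := Nat.one_le_iff_ne_zero.2 fun h0 => by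
    obtain ⟨v, rfl⟩ := hy
    rw [h0, pow_zero, one_mul] at hyw
    omega
  exact ⟨n, z, u, hn, by rw [blockNum, ← hyw, Nat.add_sub_cancel]⟩

theorem lowBlockLen_mem_Icc {M r x : ℕ} (hr : 1 ≤ r) (hx : x ∈ popcountSet M r) :
    lowBlockLen x ∈ Icc 1 r := by
  obtain ⟨n, z, u, hn, rfl⟩ := exists_eq_blockNum (ne_zero_of_mem_popcountSet hr hx)
  rw [lowBlockLen_blockNum z u hn]
  exact mem_Icc.2 ⟨hn, ((blockNum_mem_popcountSet_iff hn).1 hx).2.1⟩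

theorem card_filter_lowBlockLen_eq {M r n : ℕ} (hn : 1 ≤ n) (hnr : n ≤ r) :
    #{x ∈ popcountSet M r | lowBlockLen x = n} =
      ∑ z ∈ range (M + 1 - n), (M - (z + n + 1)).choose (r - n) := by
  have hfiber : {x ∈ popcountSet M r | lowBlockLen x = n} =
      ((range (M + 1 - n)).sigma fun z => popcountSet (M - (z + n + 1)) (r - n)).image
        fun p => blockNum n p.1 p.2 := by
    ext x
    simp only [mem_filter, mem_image, mem_sigma, mem_range, Sigma.exists]
    constructor
    · rintro ⟨hx, rfl⟩
      have hx0 : x ≠ 0 := by rintro rfl; simp [lowBlockLen] at hn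
      obtain ⟨n', z, u, hn', rfl⟩ := exists_eq_blockNum hx0
      rw [lowBlockLen_blockNum z u hn']
      obtain ⟨hzn, -, hu⟩ := (blockNum_mem_popcountSet_iff hn').1 hx
      exact ⟨z, u, ⟨by omega, hu⟩, rfl⟩
    · rintro ⟨z, u, ⟨hz, hu⟩, rfl⟩
      exact ⟨(blockNum_mem_popcountSet_iff hn).2 ⟨by omega, hnr, hu⟩,
        lowBlockLen_blockNum z u hn⟩
  rw [hfiber, card_image_of_injective _ (blockNum_injective hn), card_sigma]
  simp only [card_popcountSet]

theorem sum_lowBlockLen_popcountSet {M r : ℕ} (hr : 1 ≤ r) (hrM : r ≤ M) :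
    ∑ x ∈ popcountSet M r, lowBlockLen x =
      ∑ n ∈ Icc 1 r, n * (M - n).choose (r - n + 1) + r := by
  rw [← sum_fiberwise_of_maps_to fun x hx => lowBlockLen_mem_Icc hr hx]
  have hfiber : ∀ n ∈ Icc 1 r, ∑ x ∈ popcountSet M r with lowBlockLen x = n, lowBlockLen x =
      n * (M - n).choose (r - n + 1) + if n = r then n else 0 := by
    intro n hn
    obtain ⟨hn1, hnr⟩ := mem_Icc.1 hn
    have hcount : ∑ z ∈ range (M + 1 - n), (M - (z + n + 1)).choose (r - n) =
        (M - n).choose (r - n + 1) + if r - n = 0 then 1 else 0 := by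
      rw [← Nat.sum_range_choose_sub_succ, show M + 1 - n = M - n + 1 by omega]
      exact sum_congr rfl fun z _ => by rw [show M - (z + n + 1) = M - n - (z + 1) by omega]
    rw [sum_congr rfl fun x hx => (mem_filter.1 hx).2, sum_const, smul_eq_mul, mul_comm,
      card_filter_lowBlockLen_eq hn1 hnr, hcount]
    split_ifs <;> first | omega | ring
  rw [sum_congr rfl hfiber, sum_add_distrib, sum_ite_eq' (Icc 1 r) r (fun n => n),
    if_pos (mem_Icc.2 ⟨hr, le_rfl⟩)]

theorem two_pow_sub_one_mem_popcountSet {M r : ℕ} (hr : 1 ≤ r) (hrM : r ≤ M) :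
    2 ^ r - 1 ∈ popcountSet M r := by
  simpa [blockNum] using (blockNum_mem_popcountSet_iff (M := M) (z := 0) (u := 0) hr).2
    ⟨by omega, le_rfl, by simp [mem_popcountSet]⟩

theorem isLeast_popcountSet {M r : ℕ} (hr : 1 ≤ r) (hrM : r ≤ M) :
    IsLeast (popcountSet M r : Set ℕ) (2 ^ r - 1) := by
  refine ⟨two_pow_sub_one_mem_popcountSet hr hrM, fun x hx => ?_⟩
  by_contra! hlt
  have hx' : x ∈ popcountSet r r := mem_popcountSet.2
    ⟨Nat.toFinset_bitIndices_subset_range_iff.2 (by omega), (mem_popcountSet.1 hx).2⟩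
  have := card_le_one.1 (by rw [card_popcountSet, Nat.choose_self]) x hx' _
    (two_pow_sub_one_mem_popcountSet hr le_rfl)
  omega

theorem lowBlockLen_two_pow_sub_one {r : ℕ} (hr : 1 ≤ r) : lowBlockLen (2 ^ r - 1) = r := by
  simpa [blockNum] using lowBlockLen_blockNum (n := r) 0 0 hr

/-- Let `k ≥ 1` and let `m(1) < m(2) < … < m(N)` (with `N = C(2k,k)`) enumerate the
`2k`-bit integers with exactly `k` ones in increasing order. For every index the
length `n` of the least significant block of ones satisfies `1 ≤ n ≤ k`, and the sum
over all consecutive transitions among the first `N−1` indices of the per-step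
replacement cost (`n` = block length of the destination index) plus the final
index's block size equals `∑_{n=1}^{k} n · C(2k−n, k−n+1)`. -/
theorem stmt_18 (k : ℕ) (hk : 1 ≤ k) (L : List ℕ)
    (hL : L = Finset.sort
      ((Finset.range (2 ^ (2 * k))).filter (fun z : ℕ =>
        ((Finset.range (2 * k)).filter (fun i => z.testBit i)).card = k)) (· ≤ ·)) :
    L.length = Nat.choose (2 * k) k ∧
    (∀ x ∈ L, 1 ≤ lowBlockLen x ∧ lowBlockLen x ≤ k) ∧
    (∑ t ∈ Finset.range (L.length - 2), lowBlockLen (L.getD (t + 1) 0))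
        + lowBlockLen (L.getD (L.length - 1) 0)
      = ∑ n ∈ Finset.Icc 1 k, n * Nat.choose (2 * k - n) (k - n + 1) := by
  change L = (popcountSet (2 * k) k).sort at hL
  have hlen : L.length = (2 * k).choose k := by rw [hL, length_sort, card_popcountSet]
  have hlen2 : 2 ≤ L.length := by
    rw [hlen, ← Nat.centralBinom_eq_two_mul_choose]
    exact Nat.two_le_centralBinom k hk
  have hfirst : L.getD 0 0 = 2 ^ k - 1 := by
    rw [List.getD_eq_getElem _ _ (by omega)]
    simp only [hL, sorted_zero_eq_min']
    exact (isLeast_min' _ _).unique (isLeast_popcountSet hk (by omega))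
  have htotal :
      (L.map lowBlockLen).sum = ∑ n ∈ Icc 1 k, n * (2 * k - n).choose (k - n + 1) + k := by
    rw [hL, sum_map_sort, sum_lowBlockLen_popcountSet hk (by omega)]
  refine ⟨hlen, fun x hx => mem_Icc.1 (lowBlockLen_mem_Icc hk (by rwa [hL, mem_sort] at hx)), ?_⟩
  have hsplit := sum_range_eq_first_add_middle_add_last (fun i => lowBlockLen (L.getD i 0)) hlen2
  rw [sum_range_length_getD, htotal, hfirst, lowBlockLen_two_pow_sub_one hk] at hsplit
  omega
end
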